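/- (Consistency of the random-batch force, Proposition 2.1, first part.) In the multi-species batch model with deterministic positions x and kernels K_ij, for every species i and particle k of species i, the expectation of the random-batch remainder vanishes: E[χ_i^k(x)] = 0; equivalently, the expectation of the random-batch interaction force f_i^k(x) = Σ_j β_ij Σ_{ℓ: a_j(ℓ)=a_i(k), (j,ℓ)≠(i,k)} K_ij(x_i^k − x_j^ℓ) equals the full interaction force g_i^k(x) = Σ_j α_ij Σ_{ℓ, (j,ℓ)≠(i,k)} K_ij(x_i^k − x_j^ℓ). -/

import Mathlib

/-!
By linearity of expectation it suffices to show, for every particle `(j, ℓ) ≠ (i, k)`, that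
`β_ij` times the probability that `(j, ℓ)` shares the batch of `(i, k)` equals `α_ij`.
The pair `(σ_i k, σ_j ℓ)` is uniformly distributed on its orbit under the product of the
permutation groups: all of `Fin N_i × Fin N_j` if `j ≠ i`, the off-diagonal pairs if `j = i`.
Counting same-batch pairs in these orbits gives the probabilities `min b_i b_j / (b_i b_j)` and
`(p_i - 1) / (N_i - 1)`.
-/

open Finset

namespace MulAction

variable {G X : Type*} [Group G] [Fintype G] [MulAction G X]

theorem card_nsmul_sum_smul_eq {M : Type*} [AddCommMonoid M] {x : X} {s : Finset X}
    (hs : (s : Set X) = orbit G x) (f : X → M) :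
    #s • ∑ g : G, f (g • x) = Fintype.card G • ∑ y ∈ s, f y := by
  have hmem : ∀ y, y ∈ s ↔ ∃ g : G, g • x = y := fun y => by
    rw [← mem_coe, hs, mem_orbit_iff]
  have hsmul_mem : ∀ g : G, ∀ y ∈ s, g • y ∈ s := by
    intro g y hy
    obtain ⟨h, rfl⟩ := (hmem y).1 hy
    exact (hmem _).2 ⟨g * h, mul_smul g h x⟩
  have hconst : ∀ y ∈ s, ∑ g : G, f (g • y) = ∑ g : G, f (g • x) := by
    intro y hy
    obtain ⟨h, rfl⟩ := (hmem y).1 hy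
    exact Fintype.sum_equiv (Equiv.mulRight h) _ _ fun g => by simp [mul_smul]
  calc #s • ∑ g : G, f (g • x) = ∑ y ∈ s, ∑ g : G, f (g • y) := by
        rw [sum_congr rfl hconst, sum_const]
    _ = ∑ g : G, ∑ y ∈ s, f (g • y) := sum_comm
    _ = ∑ g : G, ∑ y ∈ s, f y := sum_congr rfl fun g _ =>
        sum_nbij' (g • ·) (g⁻¹ • ·) (hsmul_mem g) (hsmul_mem g⁻¹)
          (fun y _ => inv_smul_smul g y) (fun y _ => smul_inv_smul g y) fun _ _ => rfl
    _ = Fintype.card G • ∑ y ∈ s, f y := by rw [sum_const, card_univ]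

theorem card_mul_card_filter_smul_eq {x : X} {s : Finset X} (hs : (s : Set X) = orbit G x)
    (P : X → Prop) [DecidablePred P] :
    #s * #{g : G | P (g • x)} = Fintype.card G * #{y ∈ s | P y} := by
  have := card_nsmul_sum_smul_eq hs fun y => if P y then 1 else 0
  simpa only [smul_eq_mul, ← sum_filter, ← card_eq_sum_ones] using this

end MulAction

namespace Equiv.Perm

variable {ι : Type*} {β : ι → Type*}

abbrev piEvalMulAction (i : ι) : MulAction (∀ m, Perm (β m)) (β i) :=
  MulAction.compHom (β i) (Pi.evalMonoidHom (fun m => Perm (β m)) i)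

variable [DecidableEq ι] [Fintype ι] [∀ m, Fintype (β m)] [∀ m, DecidableEq (β m)]

theorem card_mul_card_filter_pi_apply_of_ne {i j : ι} (hij : i ≠ j) (a : β i) (b : β j)
    (P : β i → β j → Prop) [∀ u v, Decidable (P u v)] :
    Fintype.card (β i) * Fintype.card (β j) * #{σ : ∀ m, Perm (β m) | P (σ i a) (σ j b)} =
      Fintype.card (∀ m, Perm (β m)) * #{q : β i × β j | P q.1 q.2} := by
  let := piEvalMulAction (β := β) i
  let := piEvalMulAction (β := β) j
  have hs : ((univ : Finset (β i × β j)) : Set (β i × β j)) =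
      MulAction.orbit (∀ m, Perm (β m)) (a, b) := by
    ext ⟨u, v⟩
    simp only [coe_univ, Set.mem_univ, true_iff, MulAction.mem_orbit_iff]
    refine ⟨Pi.mulSingle i (swap a u) * Pi.mulSingle j (swap b v), ?_⟩
    simp [MulAction.compHom_smul_def, Perm.smul_def, hij, hij.symm]
  simpa [MulAction.compHom_smul_def, Perm.smul_def] using
    MulAction.card_mul_card_filter_smul_eq hs fun q => P q.1 q.2

theorem card_offDiag_mul_card_filter_pi_apply_apply (i : ι) {a b : β i} (hab : a ≠ b)
    (P : β i → β i → Prop) [∀ u v, Decidable (P u v)] :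
    #(univ : Finset (β i)).offDiag * #{σ : ∀ m, Perm (β m) | P (σ i a) (σ i b)} =
      Fintype.card (∀ m, Perm (β m)) * #{q ∈ (univ : Finset (β i)).offDiag | P q.1 q.2} := by
  let := piEvalMulAction (β := β) i
  have hs : ((univ : Finset (β i)).offDiag : Set (β i × β i)) =
      MulAction.orbit (∀ m, Perm (β m)) (a, b) := by
    ext ⟨u, v⟩
    simp only [coe_offDiag, coe_univ, Set.mem_offDiag, Set.mem_univ, true_and,
      MulAction.mem_orbit_iff]
    constructor
    · intro huv
      obtain ⟨τ, hτ⟩ := exists_extending_pair ![a, b] ![u, v]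
        (by intro s t; fin_cases s <;> fin_cases t <;> simp [hab, hab.symm])
        (by intro s t; fin_cases s <;> fin_cases t <;> simp [huv, huv.symm])
      refine ⟨Pi.mulSingle i τ, ?_⟩
      simpa [MulAction.compHom_smul_def, Perm.smul_def] using ⟨hτ 0, hτ 1⟩
    · rintro ⟨σ, hσ⟩
      simp only [Prod.smul_mk, Prod.mk.injEq] at hσ
      rw [← hσ.1, ← hσ.2]
      exact (MulAction.injective _).ne hab
  simpa [MulAction.compHom_smul_def, Perm.smul_def] using
    MulAction.card_mul_card_filter_smul_eq hs fun q => P q.1 q.2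

end Equiv.Perm

theorem Fin.card_filter_div_eq (b a : ℕ) {p : ℕ} (hp : 0 < p) :
    #{v : Fin (b * p) | (v : ℕ) / p = a} = if a < b then p else 0 := by
  have hsplit : ({v : Fin (b * p) | (v : ℕ) / p = a} : Finset (Fin (b * p))) =
      univ.filter (fun v : Fin (b * p) => (v : ℕ) < (a + 1) * p) \
        univ.filter (fun v : Fin (b * p) => (v : ℕ) < a * p) := by
    ext v
    simp only [mem_filter, mem_univ, true_and, mem_sdiff, ← Nat.div_lt_iff_lt_mul hp]
    omega
  have hmono : a * p ≤ (a + 1) * p := Nat.mul_le_mul_right p a.le_succ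
  rw [hsplit, card_sdiff_of_subset fun v => by
      simpa only [mem_filter, mem_univ, true_and] using fun hv => hv.trans_le hmono,
    Fin.card_filter_val_lt, Fin.card_filter_val_lt]
  split_ifs with hab
  · have : (a + 1) * p ≤ b * p := Nat.mul_le_mul_right p hab
    rw [min_eq_right this, min_eq_right (hmono.trans this), add_mul, Nat.add_sub_cancel_left,
      one_mul]
  · have : b * p ≤ a * p := Nat.mul_le_mul_right p (not_lt.1 hab)
    rw [min_eq_left this, min_eq_left (this.trans hmono), Nat.sub_self]

theorem Fin.card_filter_div_eq_div (b b' : ℕ) {p p' : ℕ} (hp : 0 < p) (hp' : 0 < p') :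
    #{q : Fin (b * p) × Fin (b' * p') | (q.2 : ℕ) / p' = q.1 / p} = p * p' * min b b' := by
  rw [card_filter, Fintype.sum_prod_type]
  simp only [← sum_filter, ← card_eq_sum_ones, Fin.card_filter_div_eq b' _ hp']
  rw [Finset.sum_const, smul_eq_mul]
  simp only [Nat.div_lt_iff_lt_mul hp, Fin.card_filter_val_lt, min_mul_mul_right]
  ring

theorem Fin.card_filter_offDiag_div_eq_div (b : ℕ) {p : ℕ} (hp : 0 < p) :
    #{q ∈ (univ : Finset (Fin (b * p))).offDiag | (q.2 : ℕ) / p = q.1 / p} =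
      b * p * (p - 1) := by
  have hdiag : #{q ∈ (univ : Finset (Fin (b * p))).diag | (q.2 : ℕ) / p = q.1 / p} = b * p := by
    rw [filter_true_of_mem fun q hq => by rw [(mem_diag.1 hq).2], diag_card, card_univ,
      Fintype.card_fin]
  have hall := Fin.card_filter_div_eq_div b b hp hp
  rw [← univ_product_univ, ← diag_union_offDiag, filter_union, card_union_of_disjoint
    (disjoint_filter_filter (disjoint_diag_offDiag _)), hdiag, min_self] at hall
  rw [Nat.mul_sub_one, show b * p * p = p * p * b by ring]
  omega

theorem inv_card_smul_sum_sum_smul_sum_filter {Ω ι E : Type*} [Fintype Ω] [Nonempty Ω]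
    [Fintype ι] {β : ι → Type*} [∀ j, Fintype (β j)] [AddCommGroup E] [Module ℝ E]
    (P : Ω → ∀ j, β j → Prop) (Q : ∀ j, β j → Prop) [∀ ω j ℓ, Decidable (P ω j ℓ)]
    [∀ j ℓ, Decidable (Q j ℓ)] (w w' : ι → ℝ) (v : ∀ j, β j → E)
    (h : ∀ j ℓ, Q j ℓ → w j * #{ω | P ω j ℓ} = w' j * Fintype.card Ω) :
    (Fintype.card Ω : ℝ)⁻¹ • ∑ ω, ∑ j, w j • ∑ ℓ ∈ univ.filter (fun ℓ => P ω j ℓ ∧ Q j ℓ), v j ℓ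
      = ∑ j, w' j • ∑ ℓ ∈ univ.filter (Q j), v j ℓ := by
  rw [inv_smul_eq_iff₀ (Nat.cast_ne_zero.2 Fintype.card_ne_zero), smul_sum, sum_comm]
  refine sum_congr rfl fun j _ => ?_
  rw [← smul_sum, sum_comm' (t' := univ.filter (Q j)) (s' := fun ℓ => univ.filter (P · j ℓ))
    (by simp)]
  simp only [sum_const, smul_sum, smul_smul, ← Nat.cast_smul_eq_nsmul ℝ]
  refine sum_congr rfl fun ℓ hℓ => ?_
  rw [h j ℓ (mem_filter.1 hℓ).2, mul_comm]

namespace RandomBatch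

open Equiv

variable {ι : Type*} [Fintype ι] [DecidableEq ι] (b p : ι → ℕ)

theorem weight_mul_card_sameBatch_of_ne {i j : ι} (hij : i ≠ j) (k : Fin (b i * p i))
    (ℓ : Fin (b j * p j)) :
    (b i : ℝ) / (p j * min (b i : ℝ) (b j)) *
        #{σ : ∀ m, Perm (Fin (b m * p m)) | (σ j ℓ : ℕ) / p j = (σ i k : ℕ) / p i} =
      ((b j * p j : ℕ) : ℝ)⁻¹ * Fintype.card (∀ m, Perm (Fin (b m * p m))) := by
  obtain ⟨hbi, hpi⟩ := CanonicallyOrderedAdd.mul_pos.1 k.pos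
  obtain ⟨hbj, hpj⟩ := CanonicallyOrderedAdd.mul_pos.1 ℓ.pos
  have hcount := Perm.card_mul_card_filter_pi_apply_of_ne (β := fun m => Fin (b m * p m)) hij
    k ℓ fun (u : Fin (b i * p i)) (v : Fin (b j * p j)) => (v : ℕ) / p j = (u : ℕ) / p i
  rw [Fin.card_filter_div_eq_div _ _ hpi hpj, Fintype.card_fin, Fintype.card_fin] at hcount
  have hcount' := congrArg (Nat.cast : ℕ → ℝ) hcount
  push_cast at hcount' ⊢
  field_simp
  apply mul_left_cancel₀ (by positivity : (p i : ℝ) * p j ≠ 0)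
  linear_combination hcount'

theorem weight_mul_card_sameBatch_self {i : ι} (hp : 2 ≤ p i) {k ℓ : Fin (b i * p i)}
    (hkℓ : k ≠ ℓ) :
    (b i : ℝ) / ((p i - 1) * min (b i : ℝ) (b i)) *
        #{σ : ∀ m, Perm (Fin (b m * p m)) | (σ i ℓ : ℕ) / p i = (σ i k : ℕ) / p i} =
      ((b i * p i : ℕ) - 1 : ℝ)⁻¹ * Fintype.card (∀ m, Perm (Fin (b m * p m))) := by
  have hN : 1 ≤ b i * p i := k.pos
  have hb : 0 < b i := Nat.pos_of_mul_pos_right hN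
  have hcount := Perm.card_offDiag_mul_card_filter_pi_apply_apply
    (β := fun m => Fin (b m * p m)) i hkℓ fun (u v : Fin (b i * p i)) => (v : ℕ) / p i = u / p i
  rw [Fin.card_filter_offDiag_div_eq_div _ (by omega), offDiag_card, card_univ,
    Fintype.card_fin, ← Nat.mul_sub_one] at hcount
  have hcount' := congrArg (Nat.cast : ℕ → ℝ) hcount
  push_cast [Nat.cast_sub hN, Nat.cast_sub (by omega : 1 ≤ p i)] at hcount' ⊢
  have hp1 : (p i : ℝ) - 1 ≠ 0 := sub_ne_zero.2 (by exact_mod_cast (by omega : p i ≠ 1))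
  have hN1 : (b i : ℝ) * p i - 1 ≠ 0 :=
    sub_ne_zero.2 (by exact_mod_cast (by nlinarith : b i * p i ≠ 1))
  rw [min_self]
  field_simp
  apply mul_left_cancel₀ (by positivity : (b i : ℝ) * p i ≠ 0)
  linear_combination hcount'

theorem weight_mul_card_sameBatch {i j : ι} (hp : 2 ≤ p i) (k : Fin (b i * p i))
    (ℓ : Fin (b j * p j)) (hne : (⟨j, ℓ⟩ : Σ m, Fin (b m * p m)) ≠ ⟨i, k⟩) :
    (b i : ℝ) / (((p j : ℝ) - if i = j then 1 else 0) * (min (b i) (b j) : ℝ)) *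
        #{σ : ∀ m, Perm (Fin (b m * p m)) | (σ j ℓ : ℕ) / p j = (σ i k : ℕ) / p i} =
      (((b j * p j : ℕ) : ℝ) - if i = j then 1 else 0)⁻¹ *
        Fintype.card (∀ m, Perm (Fin (b m * p m))) := by
  obtain rfl | hij := eq_or_ne i j
  · rw [if_pos rfl]
    exact weight_mul_card_sameBatch_self b p hp fun h => hne (h ▸ rfl)
  · rw [if_neg hij, sub_zero, sub_zero]
    exact weight_mul_card_sameBatch_of_ne b p hij k ℓ

end RandomBatch

theorem random_batch_consistency_general
    (n : ℕ) (d : ℕ) (b p N : Fin n → ℕ)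
    (hp : ∀ m, 2 ≤ p m) (hN : ∀ m, N m = b m * p m)
    (x : ∀ j : Fin n, Fin (N j) → EuclideanSpace ℝ (Fin d))
    (K : Fin n → Fin n → EuclideanSpace ℝ (Fin d) → EuclideanSpace ℝ (Fin d))
    (i : Fin n) (k : Fin (N i)) :
    (Fintype.card (∀ m : Fin n, Equiv.Perm (Fin (N m))) : ℝ)⁻¹ •
      ∑ σ : ∀ m : Fin n, Equiv.Perm (Fin (N m)),
        ((∑ j : Fin n,
            ((b i : ℝ) / (((p j : ℝ) - if i = j then 1 else 0) * (min (b i) (b j) : ℝ))) •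
              ∑ ℓ ∈ Finset.univ.filter (fun ℓ : Fin (N j) =>
                  (σ j ℓ : ℕ) / p j = (σ i k : ℕ) / p i ∧
                  (⟨j, ℓ⟩ : Σ m : Fin n, Fin (N m)) ≠ ⟨i, k⟩),
                K i j (x i k - x j ℓ))
          - ∑ j : Fin n,
              (((N j : ℝ) - if i = j then 1 else 0))⁻¹ •
                ∑ ℓ ∈ Finset.univ.filter (fun ℓ : Fin (N j) =>
                    (⟨j, ℓ⟩ : Σ m : Fin n, Fin (N m)) ≠ ⟨i, k⟩),
                  K i j (x i k - x j ℓ))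
    = 0 := by
  obtain rfl : N = fun m => b m * p m := funext hN
  rw [sum_sub_distrib, smul_sub, sum_const, card_univ, ← Nat.cast_smul_eq_nsmul ℝ,
    inv_smul_smul₀ (Nat.cast_ne_zero.2 Fintype.card_ne_zero), sub_eq_zero]
  exact inv_card_smul_sum_sum_smul_sum_filter _ _ _ _ _ fun j ℓ hne =>
    RandomBatch.weight_mul_card_sameBatch b p (hp i) k ℓ hne

/-- **Consistency, Proposition 2.1, first part.** In the
multi-species batch model, with deterministic positions `x` and kernels `K i j`,
the expectation (under the product of the uniform measures on the permutation
groups) of the random-batch remainder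
`χ_i^k = Σ_j β i j • Σ_{ℓ in the same super-batch, (j,ℓ) ≠ (i,k)} K i j (x i k - x j ℓ)
  - Σ_j α i j • Σ_{(j,ℓ) ≠ (i,k)} K i j (x i k - x j ℓ)`
vanishes, where `α i j = 1/(N j - δ_ij)` and
`β i j = b i / ((p j - δ_ij) * min (b i) (b j))`. -/
theorem random_batch_consistency
    (n : ℕ) (hn : 1 ≤ n) (d : ℕ) (b p N : Fin n → ℕ)
    (hb : ∀ m, 1 ≤ b m) (hp : ∀ m, 2 ≤ p m) (hN : ∀ m, N m = b m * p m)
    (x : ∀ j : Fin n, Fin (N j) → EuclideanSpace ℝ (Fin d))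
    (K : Fin n → Fin n → EuclideanSpace ℝ (Fin d) → EuclideanSpace ℝ (Fin d))
    (i : Fin n) (k : Fin (N i)) :
    (Fintype.card (∀ m : Fin n, Equiv.Perm (Fin (N m))) : ℝ)⁻¹ •
      ∑ σ : ∀ m : Fin n, Equiv.Perm (Fin (N m)),
        ((∑ j : Fin n,
            ((b i : ℝ) / (((p j : ℝ) - if i = j then 1 else 0) * (min (b i) (b j) : ℝ))) •
              ∑ ℓ ∈ Finset.univ.filter (fun ℓ : Fin (N j) =>
                  (σ j ℓ : ℕ) / p j = (σ i k : ℕ) / p i ∧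
                  (⟨j, ℓ⟩ : Σ m : Fin n, Fin (N m)) ≠ ⟨i, k⟩),
                K i j (x i k - x j ℓ))
          - ∑ j : Fin n,
              (((N j : ℝ) - if i = j then 1 else 0))⁻¹ •
                ∑ ℓ ∈ Finset.univ.filter (fun ℓ : Fin (N j) =>
                    (⟨j, ℓ⟩ : Σ m : Fin n, Fin (N m)) ≠ ⟨i, k⟩),
                  K i j (x i k - x j ℓ))
    = 0 :=
  random_batch_consistency_general n d b p N hp hN x K i k
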